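/- arXiv:1912.10627 — 7 statements merged into one kernel-verified Lean document; each statement's English description precedes it below -/
import Mathlib

section
/- Let V be a finite-dimensional inner product space, let {P'_k}_{k=1}^m be orthogonal projections onto mutually orthogonal subspaces whose direct sum is V, and let {P_k}_{k=1}^m be orthogonal projections on V such that the operator norm ‖P'_k − P_k‖ ≤ γ for all k, where γ ∈ (0,1]. Then for every v ∈ V, (1 − √m·γ)·‖v‖ ≤ sqrt(∑_{k=1}^m ‖P_k v‖²) ≤ (1 + √m·γ)·‖v‖. -/
/-! The families `(P k v)ₖ` and `(P' k v)ₖ` are vectors of `ℓ²(Fin m; V)`. By the decomposition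
hypothesis the second has norm `‖v‖`, and coordinatewise their distance is at most `γ ‖v‖`, so it
is at most `√m γ ‖v‖`; the reverse triangle inequality in `ℓ²` gives both bounds. -/

section L2Families

variable {ι E : Type*} [Fintype ι] [SeminormedAddCommGroup E]

theorem abs_sqrt_sum_sq_norm_sub_le (x y : ι → E) :
    |√(∑ k, ‖x k‖ ^ 2) - √(∑ k, ‖y k‖ ^ 2)| ≤ √(∑ k, ‖x k - y k‖ ^ 2) := by
  simpa only [PiLp.norm_eq_of_L2, PiLp.toLp_apply, ← WithLp.toLp_sub, Pi.sub_apply] using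
    abs_norm_sub_norm_le (WithLp.toLp 2 x) (WithLp.toLp 2 y)

theorem sqrt_sum_sq_norm_le_of_forall_norm_le (x : ι → E) {c : ℝ} (h : ∀ k, ‖x k‖ ≤ c) :
    √(∑ k, ‖x k‖ ^ 2) ≤ √(Fintype.card ι) * c := by
  rcases isEmpty_or_nonempty ι with hι | ⟨⟨k₀⟩⟩
  · simp
  have hc : 0 ≤ c := (norm_nonneg _).trans (h k₀)
  calc √(∑ k, ‖x k‖ ^ 2) ≤ √(∑ _k : ι, c ^ 2) :=
        Real.sqrt_le_sqrt <| Finset.sum_le_sum fun k _ => pow_le_pow_left₀ (norm_nonneg _) (h k) 2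
    _ = √(Fintype.card ι) * c := by
        rw [Finset.sum_const, Finset.card_univ, nsmul_eq_mul, Real.sqrt_mul (Nat.cast_nonneg _),
          Real.sqrt_sq hc]

variable {F : Type*} [SeminormedAddCommGroup F] [NormedSpace ℝ E] [NormedSpace ℝ F]

theorem abs_sqrt_sum_sq_norm_apply_sub_le (A B : ι → E →L[ℝ] F) {γ : ℝ}
    (hAB : ∀ k, ‖A k - B k‖ ≤ γ) (v : E) :
    |√(∑ k, ‖A k v‖ ^ 2) - √(∑ k, ‖B k v‖ ^ 2)| ≤ √(Fintype.card ι) * (γ * ‖v‖) :=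
  (abs_sqrt_sum_sq_norm_sub_le _ _).trans <| sqrt_sum_sq_norm_le_of_forall_norm_le _ fun k =>
    (A k - B k).le_of_opNorm_le (hAB k) v

end L2Families

theorem stmt0_general {V : Type*} [NormedAddCommGroup V] [InnerProductSpace ℝ V]
    {m : ℕ} (γ : ℝ)
    (P' P : Fin m → V →L[ℝ] V)
    (hdecomp : ∀ v : V, ∑ k, ‖P' k v‖ ^ 2 = ‖v‖ ^ 2)
    (hclose : ∀ k, ‖P' k - P k‖ ≤ γ) :
    ∀ v : V,
      (1 - Real.sqrt m * γ) * ‖v‖ ≤ Real.sqrt (∑ k, ‖P k v‖ ^ 2) ∧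
      Real.sqrt (∑ k, ‖P k v‖ ^ 2) ≤ (1 + Real.sqrt m * γ) * ‖v‖ := by
  intro v
  have hdiff := abs_sqrt_sum_sq_norm_apply_sub_le P' P hclose v
  rw [hdecomp, Real.sqrt_sq (norm_nonneg v), Fintype.card_fin, abs_le] at hdiff
  constructor <;> linarith [hdiff.1, hdiff.2]

theorem stmt0 {V : Type*} [NormedAddCommGroup V] [InnerProductSpace ℝ V]
    [FiniteDimensional ℝ V] {m : ℕ} (γ : ℝ) (hγ0 : 0 < γ) (hγ1 : γ ≤ 1)
    (P' P : Fin m → V →L[ℝ] V)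
    (hP'proj : ∀ k, IsSelfAdjoint (P' k) ∧ P' k ∘L P' k = P' k)
    (hPproj : ∀ k, IsSelfAdjoint (P k) ∧ P k ∘L P k = P k)
    (hdecomp : ∀ v : V, ∑ k, ‖P' k v‖ ^ 2 = ‖v‖ ^ 2)
    (hclose : ∀ k, ‖P' k - P k‖ ≤ γ) :
    ∀ v : V,
      (1 - Real.sqrt m * γ) * ‖v‖ ≤ Real.sqrt (∑ k, ‖P k v‖ ^ 2) ∧
      Real.sqrt (∑ k, ‖P k v‖ ^ 2) ≤ (1 + Real.sqrt m * γ) * ‖v‖ :=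
  stmt0_general γ P' P hdecomp hclose
end

section
/- Let U and U' be d-dimensional subspaces of a real inner product space with orthogonal projections P_U and P_{U'}. If u_1,…,u_d and u'_1,…,u'_d are orthonormal bases for U and U' respectively such that ⟨u_i, u'_i⟩ ≥ β for all i, then the operator norm ‖P_U − P_{U'}‖ ≤ d·√(1−β²). -/
/-!
With orthonormal bases, `P_U - P_{U'} = ∑ i, (|u i⟩⟨u i| - |u' i⟩⟨u' i|)`. For unit vectors `a`, `b`
the difference of rank-one projections has norm at most `√(1 - ⟪a, b⟫²)`, which is at most
`√(1 - β²)` once `0 ≤ β ≤ ⟪a, b⟫`; the triangle inequality over the `d` summands finishes.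
-/

open scoped InnerProductSpace
open InnerProductSpace

theorem Orthonormal.starProjection_span_eq_sum_rankOne {𝕜 E ι : Type*} [RCLike 𝕜]
    [NormedAddCommGroup E] [InnerProductSpace 𝕜 E] [Fintype ι] {v : ι → E}
    (hv : Orthonormal 𝕜 v) [(Submodule.span 𝕜 (Set.range v)).HasOrthogonalProjection] :
    (Submodule.span 𝕜 (Set.range v)).starProjection = ∑ i, rankOne 𝕜 (v i) (v i) := by
  have hb : Orthonormal 𝕜 (Module.Basis.span hv.linearIndependent) := by
    simpa only [← Module.Basis.span_apply hv.linearIndependent] using orthonormal_span hv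
  simpa using (Module.Basis.toOrthonormalBasis _ hb).starProjection_eq_sum_rankOne

theorem norm_sq_inner_smul_sub_inner_smul_le {V : Type*} [NormedAddCommGroup V]
    [InnerProductSpace ℝ V] {a b : V} (ha : ‖a‖ = 1) (hb : ‖b‖ = 1) (x : V) :
    ‖⟪a, x⟫_ℝ • a - ⟪b, x⟫_ℝ • b‖ ^ 2 ≤ (1 - ⟪a, b⟫_ℝ ^ 2) * ‖x‖ ^ 2 := by
  have haa : ⟪a, a⟫_ℝ = 1 := by simp [ha]
  have hbb : ⟪b, b⟫_ℝ = 1 := by simp [hb]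
  -- Cauchy–Schwarz for the components of `b` and `x` orthogonal to `a`
  have hCS := real_inner_mul_inner_self_le (b - ⟪a, b⟫_ℝ • a) (x - ⟪a, x⟫_ℝ • a)
  rw [← real_inner_self_eq_norm_sq]
  simp only [inner_sub_left, inner_sub_right, real_inner_smul_left, real_inner_smul_right,
    haa, hbb, real_inner_self_eq_norm_sq x, real_inner_comm a b, real_inner_comm a x] at hCS ⊢
  linear_combination hCS

theorem norm_rankOne_self_sub_rankOne_self_le {V : Type*} [NormedAddCommGroup V]
    [InnerProductSpace ℝ V] {a b : V} (ha : ‖a‖ = 1) (hb : ‖b‖ = 1) :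
    ‖rankOne ℝ a a - rankOne ℝ b b‖ ≤ √(1 - ⟪a, b⟫_ℝ ^ 2) := by
  refine ContinuousLinearMap.opNorm_le_bound _ (Real.sqrt_nonneg _) fun x => ?_
  rw [sub_apply, rankOne_apply, rankOne_apply,
    ← Real.sqrt_sq (norm_nonneg x), ← Real.sqrt_mul' _ (sq_nonneg _)]
  exact Real.le_sqrt_of_sq_le (norm_sq_inner_smul_sub_inner_smul_le ha hb x)

theorem stmt1_general {V : Type*} [NormedAddCommGroup V] [InnerProductSpace ℝ V]
    [FiniteDimensional ℝ V] {d : ℕ} (β : ℝ) (hβ0 : 0 ≤ β)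
    (u u' : Fin d → V) (hu : Orthonormal ℝ u) (hu' : Orthonormal ℝ u')
    (U U' : Submodule ℝ V)
    (hU : U = Submodule.span ℝ (Set.range u))
    (hU' : U' = Submodule.span ℝ (Set.range u'))
    (hip : ∀ i, β ≤ ⟪u i, u' i⟫_ℝ) :
    ‖(U.subtypeL ∘L U.orthogonalProjection) - (U'.subtypeL ∘L U'.orthogonalProjection)‖ ≤
      d * Real.sqrt (1 - β ^ 2) := by
  subst hU hU'
  change ‖Submodule.starProjection _ - Submodule.starProjection _‖ ≤ _
  rw [hu.starProjection_span_eq_sum_rankOne, hu'.starProjection_span_eq_sum_rankOne,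
    ← Finset.sum_sub_distrib]
  calc ‖∑ i, (rankOne ℝ (u i) (u i) - rankOne ℝ (u' i) (u' i))‖
      ≤ ∑ i, ‖rankOne ℝ (u i) (u i) - rankOne ℝ (u' i) (u' i)‖ := norm_sum_le _ _
    _ ≤ ∑ _i : Fin d, √(1 - β ^ 2) := Finset.sum_le_sum fun i _ =>
        (norm_rankOne_self_sub_rankOne_self_le (hu.1 i) (hu'.1 i)).trans <|
          Real.sqrt_le_sqrt <| sub_le_sub_left (pow_le_pow_left₀ hβ0 (hip i) 2) 1
    _ = d * √(1 - β ^ 2) := by simp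

theorem stmt1 {V : Type*} [NormedAddCommGroup V] [InnerProductSpace ℝ V]
    [FiniteDimensional ℝ V] {d : ℕ} (β : ℝ) (hβ0 : 0 ≤ β) (hβ1 : β ≤ 1)
    (u u' : Fin d → V) (hu : Orthonormal ℝ u) (hu' : Orthonormal ℝ u')
    (U U' : Submodule ℝ V)
    (hU : U = Submodule.span ℝ (Set.range u))
    (hU' : U' = Submodule.span ℝ (Set.range u'))
    (hip : ∀ i, β ≤ ⟪u i, u' i⟫_ℝ) :
    ‖(U.subtypeL ∘L U.orthogonalProjection) - (U'.subtypeL ∘L U'.orthogonalProjection)‖ ≤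
      d * Real.sqrt (1 - β ^ 2) :=
  stmt1_general β hβ0 u u' hu hu' U U' hU hU' hip
end

section
/- For unit vectors u, v in a real inner product space with ⟨u,v⟩ = α, the operator norm of the map x ↦ u⟨u,x⟩ − v⟨v,x⟩ equals √(1−α²). -/
/-!
With `a = ⟪u, x⟫` and `b = ⟪v, x⟫` the image of `x` has squared norm `a² + b² - 2αab`, and
`(1 - α²)‖x‖² - (a² + b² - 2αab)` is the Gram determinant of `(u, v, x)`, hence nonnegative.
The bound is attained at `x = u`.
-/

open scoped InnerProductSpace

section

variable {V : Type*} [NormedAddCommGroup V] [InnerProductSpace ℝ V]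

theorem gram_det_fin_three_nonneg (u v x : V) :
    0 ≤ ‖u‖ ^ 2 * ‖v‖ ^ 2 * ‖x‖ ^ 2 + 2 * ⟪u, v⟫_ℝ * ⟪v, x⟫_ℝ * ⟪u, x⟫_ℝ
      - ‖u‖ ^ 2 * ⟪v, x⟫_ℝ ^ 2 - ‖v‖ ^ 2 * ⟪u, x⟫_ℝ ^ 2 - ‖x‖ ^ 2 * ⟪u, v⟫_ℝ ^ 2 := by
  have h := (Matrix.posSemidef_gram ℝ ![u, v, x]).det_nonneg
  rw [Matrix.det_fin_three] at h
  simp only [Matrix.gram_apply, Matrix.cons_val, real_inner_self_eq_norm_sq] at h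
  rw [real_inner_comm u v, real_inner_comm u x, real_inner_comm v x] at h
  linarith

theorem norm_sq_inner_smul_sub_inner_smul (u v x : V) :
    ‖⟪u, x⟫_ℝ • u - ⟪v, x⟫_ℝ • v‖ ^ 2 =
      ⟪u, x⟫_ℝ ^ 2 * ‖u‖ ^ 2 + ⟪v, x⟫_ℝ ^ 2 * ‖v‖ ^ 2 - 2 * ⟪u, v⟫_ℝ * ⟪u, x⟫_ℝ * ⟪v, x⟫_ℝ := by
  rw [norm_sub_sq_real, norm_smul, norm_smul, real_inner_smul_left, real_inner_smul_right,
    mul_pow, mul_pow, Real.norm_eq_abs, Real.norm_eq_abs, sq_abs, sq_abs]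
  ring

theorem norm_sq_inner_smul_sub_inner_smul_le_s2 {u v : V} (hu : ‖u‖ = 1) (hv : ‖v‖ = 1) (x : V) :
    ‖⟪u, x⟫_ℝ • u - ⟪v, x⟫_ℝ • v‖ ^ 2 ≤ (1 - ⟪u, v⟫_ℝ ^ 2) * ‖x‖ ^ 2 := by
  have hgram := gram_det_fin_three_nonneg u v x
  rw [norm_sq_inner_smul_sub_inner_smul, hu, hv] at *
  linarith

theorem norm_sq_inner_self_smul_sub_inner_smul {u v : V} (hu : ‖u‖ = 1) (hv : ‖v‖ = 1) :
    ‖⟪u, u⟫_ℝ • u - ⟪v, u⟫_ℝ • v‖ ^ 2 = 1 - ⟪u, v⟫_ℝ ^ 2 := by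
  rw [norm_sq_inner_smul_sub_inner_smul, real_inner_self_eq_norm_sq, real_inner_comm, hu, hv]
  ring

end

theorem stmt2 {V : Type*} [NormedAddCommGroup V] [InnerProductSpace ℝ V]
    (u v : V) (hu : ‖u‖ = 1) (hv : ‖v‖ = 1) (α : ℝ) (hα : ⟪u, v⟫_ℝ = α) :
    ‖(innerSL ℝ u).smulRight u - (innerSL ℝ v).smulRight v‖ = Real.sqrt (1 - α ^ 2) := by
  set T := (innerSL ℝ u).smulRight u - (innerSL ℝ v).smulRight v
  have hT : ∀ x, T x = ⟪u, x⟫_ℝ • u - ⟪v, x⟫_ℝ • v := fun _ ↦ rfl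
  subst hα
  apply le_antisymm
  · refine T.opNorm_le_bound (Real.sqrt_nonneg _) fun x ↦ ?_
    rw [← Real.sqrt_sq (norm_nonneg x), ← Real.sqrt_mul' _ (sq_nonneg _), hT]
    exact Real.le_sqrt_of_sq_le (norm_sq_inner_smul_sub_inner_smul_le_s2 hu hv x)
  · calc Real.sqrt (1 - ⟪u, v⟫_ℝ ^ 2) = ‖T u‖ := by
          rw [hT, ← norm_sq_inner_self_smul_sub_inner_smul hu hv, Real.sqrt_sq (norm_nonneg _)]
      _ ≤ ‖T‖ := by simpa [hu] using T.le_opNorm u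
end

section
/- Let {a_t}_{t∈ℕ} and {b_t}_{t∈ℕ} be integrable real-valued random variables adapted to a filtration {F_t}, such that almost surely for all t: 0 ≤ b_t ≤ a_t − E[a_{t+1} | F_t], and a_t ≥ a* for some constant a* ∈ ℝ. Then b_t → 0 almost surely. -/
/-! The process `a t + ∑ s < t, b s` is a supermartingale (the drop `a t - E[a (t+1) | ℱ t]`
pays for the increment `b t`) and is bounded below by `a*`, so it converges almost surely by
the martingale convergence theorem. Along such a trajectory the partial sums of the nonnegative
`b t` stay bounded, so `∑ b t < ∞` and in particular `b t → 0`. -/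

open MeasureTheory Filter Finset

theorem tendsto_zero_of_tendsto_add_sum_range {x y : ℕ → ℝ} {c l : ℝ} (hx : ∀ t, c ≤ x t)
    (hy : ∀ t, 0 ≤ y t) (hlim : Tendsto (fun t => x t + ∑ s ∈ range t, y s) atTop (nhds l)) :
    Tendsto y atTop (nhds 0) := by
  obtain ⟨M, hM⟩ := hlim.bddAbove_range
  refine (summable_of_sum_range_le hy (c := M - c) fun t => ?_).tendsto_atTop_zero
  linarith [hx t, hM (Set.mem_range_self t)]

namespace MeasureTheory

variable {Ω : Type*} {m0 : MeasurableSpace Ω} {μ : Measure Ω} {ℱ : Filtration ℕ m0}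

theorem Supermartingale.eLpNorm_one_le_of_nonneg {ι : Type*} [Preorder ι] {𝒢 : Filtration ι m0}
    [SigmaFiniteFiltration μ 𝒢] {f : ι → Ω → ℝ} (hf : Supermartingale f 𝒢 μ)
    (hnonneg : ∀ n, 0 ≤ᵐ[μ] f n) {i j : ι} (hij : i ≤ j) :
    eLpNorm (f j) 1 μ ≤ ENNReal.ofReal (∫ ω, f i ω ∂μ) := by
  rw [eLpNorm_one_eq_lintegral_enorm]
  calc ∫⁻ ω, ‖f j ω‖ₑ ∂μ = ENNReal.ofReal (∫ ω, f j ω ∂μ) := by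
        rw [ofReal_integral_eq_lintegral_ofReal (hf.integrable j) (hnonneg j)]
        refine lintegral_congr_ae ?_
        filter_upwards [hnonneg j] with ω hω
        exact Real.enorm_of_nonneg hω
    _ ≤ ENNReal.ofReal (∫ ω, f i ω ∂μ) :=
        ENNReal.ofReal_le_ofReal (by simpa using hf.setIntegral_le hij MeasurableSet.univ)

theorem Supermartingale.exists_ae_tendsto_of_bddBelow [IsFiniteMeasure μ] {f : ℕ → Ω → ℝ}
    (hf : Supermartingale f ℱ μ) {c : ℝ} (hc : ∀ n, ∀ᵐ ω ∂μ, c ≤ f n ω) :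
    ∀ᵐ ω ∂μ, ∃ l, Tendsto (fun n => f n ω) atTop (nhds l) := by
  set g : ℕ → Ω → ℝ := f - fun _ _ => c
  have hg : Supermartingale g ℱ μ := hf.sub_martingale (martingale_const ℱ μ c)
  have hg_nonneg : ∀ n, 0 ≤ᵐ[μ] g n := fun n => by
    filter_upwards [hc n] with ω hω
    simpa [g] using hω
  have hbdd : ∀ n, eLpNorm ((-g) n) 1 μ ≤ (ENNReal.ofReal (∫ ω, g 0 ω ∂μ)).toNNReal := fun n => by
    rw [Pi.neg_apply, eLpNorm_neg, ENNReal.coe_toNNReal ENNReal.ofReal_ne_top]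
    exact hg.eLpNorm_one_le_of_nonneg hg_nonneg n.zero_le
  filter_upwards [hg.neg.exists_ae_tendsto_of_bdd hbdd] with ω ⟨l, hl⟩
  exact ⟨-l + c, by simpa [g] using hl.neg.add_const c⟩

theorem stronglyMeasurable_sum_range {b : ℕ → Ω → ℝ} (hb : StronglyAdapted ℱ b) {n t : ℕ}
    (hnt : n ≤ t + 1) : StronglyMeasurable[ℱ t] fun ω => ∑ s ∈ range n, b s ω :=
  Finset.stronglyMeasurable_fun_sum _ fun _ hs =>
    hb.stronglyMeasurable_le (Nat.lt_succ_iff.1 ((mem_range.1 hs).trans_le hnt))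

theorem supermartingale_add_sum_range [IsFiniteMeasure μ] {a b : ℕ → Ω → ℝ}
    (ha : StronglyAdapted ℱ a) (hb : StronglyAdapted ℱ b)
    (ha_int : ∀ t, Integrable (a t) μ) (hb_int : ∀ t, Integrable (b t) μ)
    (hab : ∀ t, b t ≤ᵐ[μ] a t - μ[a (t + 1) | ℱ t]) :
    Supermartingale (fun t ω => a t ω + ∑ s ∈ range t, b s ω) ℱ μ := by
  have hS_int : ∀ t, Integrable (fun ω => ∑ s ∈ range t, b s ω) μ := fun t =>
    integrable_finsetSum _ fun s _ => hb_int s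
  refine supermartingale_nat (fun t => (ha t).add (stronglyMeasurable_sum_range hb t.le_succ))
    (fun t => (ha_int t).add (hS_int t)) fun t => ?_
  have hcondExp : μ[fun ω => a (t + 1) ω + ∑ s ∈ range (t + 1), b s ω | ℱ t]
      =ᵐ[μ] μ[a (t + 1) | ℱ t] + fun ω => ∑ s ∈ range (t + 1), b s ω := by
    refine (condExp_add (ha_int (t + 1)) (hS_int (t + 1)) (ℱ t)).trans ?_
    rw [condExp_of_stronglyMeasurable (ℱ.le t) (stronglyMeasurable_sum_range hb le_rfl)
      (hS_int (t + 1))]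
  filter_upwards [hcondExp, hab t] with ω hω hbω
  rw [hω, Pi.add_apply, sum_range_succ]
  rw [Pi.sub_apply] at hbω
  linarith

end MeasureTheory

theorem stmt4 {Ω : Type*} {m0 : MeasurableSpace Ω} {μ : Measure Ω} [IsProbabilityMeasure μ]
    (ℱ : Filtration ℕ m0) (a b : ℕ → Ω → ℝ)
    (ha_adapted : Adapted ℱ a) (hb_adapted : Adapted ℱ b)
    (ha_int : ∀ t, Integrable (a t) μ) (hb_int : ∀ t, Integrable (b t) μ)
    (astar : ℝ)
    (h : ∀ t, ∀ᵐ ω ∂μ,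
      0 ≤ b t ω ∧ b t ω ≤ a t ω - (μ[a (t + 1) | ℱ t]) ω ∧ astar ≤ a t ω) :
    ∀ᵐ ω ∂μ, Tendsto (fun t => b t ω) atTop (nhds 0) := by
  have hsup := supermartingale_add_sum_range ha_adapted.stronglyAdapted
    hb_adapted.stronglyAdapted ha_int hb_int fun t => by
      filter_upwards [h t] with ω hω using hω.2.1
  have hall : ∀ᵐ ω ∂μ, ∀ t, 0 ≤ b t ω ∧ b t ω ≤ a t ω - (μ[a (t + 1) | ℱ t]) ω ∧ astar ≤ a t ω :=
    ae_all_iff.2 h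
  have hbdd : ∀ t, ∀ᵐ ω ∂μ, astar ≤ a t ω + ∑ s ∈ range t, b s ω := fun t => by
    filter_upwards [hall] with ω hω
    linarith [(hω t).2.2, sum_nonneg fun s (_ : s ∈ range t) => (hω s).1]
  filter_upwards [hsup.exists_ae_tendsto_of_bddBelow hbdd, hall] with ω ⟨l, hl⟩ hω
  exact tendsto_zero_of_tendsto_add_sum_range (fun t => (hω t).2.2) (fun t => (hω t).1) hl
end

section
/- Let {A_t}_{t≥1} be a sequence of positive reals satisfying, for each t, either (η/R²)·A_t² ≤ A_t − A_{t+1} or A_t − A_{t+1} ≥ η', where η, η', R > 0 and the sequence is nonincreasing. Then for all t ≥ 1, A_{t+1} ≤ A_1 / (1 + min{A_1·η/R², η'/A_1}·t). -/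
theorem stmt5 (A : ℕ → ℝ) (η η' R : ℝ) (hη : 0 < η) (hη' : 0 < η') (hR : 0 < R)
    (hpos : ∀ t, 0 < A t) (hmono : ∀ t, A (t + 1) ≤ A t)
    (hstep : ∀ t, 1 ≤ t →
      (η / R ^ 2) * A t ^ 2 ≤ A t - A (t + 1) ∨ η' ≤ A t - A (t + 1)) :
    ∀ t, 1 ≤ t →
      A (t + 1) ≤ A 1 / (1 + min (A 1 * η / R ^ 2) (η' / A 1) * t) := by
  set c := min (A 1 * η / R ^ 2) (η' / A 1) with hcdef
  have hA1 : 0 < A 1 := hpos 1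
  have hR2 : (0:ℝ) < R ^ 2 := by positivity
  have hc : 0 < c := lt_min (by positivity) (by positivity)
  have hle1 : ∀ t, 1 ≤ t → A t ≤ A 1 := by
    intro t ht
    induction t with
    | zero => omega
    | succ n ih =>
      rcases Nat.lt_or_ge 1 (n + 1) with h | h
      · exact le_trans (hmono n) (ih (by omega))
      · have hn : n = 0 := by omega
        subst hn; exact le_refl _
  have step : ∀ t, 1 ≤ t → 1 / A t + c / A 1 ≤ 1 / A (t + 1) := by
    intro t ht
    have hAt := hpos t
    have hAt1 := hpos (t + 1)
    have hmt := hmono t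
    have hlt1 := hle1 t ht
    have hlt1' : A (t + 1) ≤ A 1 := le_trans hmt hlt1
    rcases hstep t ht with h | h
    · have hc1 : c / A 1 ≤ η / R ^ 2 := by
        have h0 : c ≤ A 1 * η / R ^ 2 := min_le_left _ _
        have h0' : c * R ^ 2 ≤ A 1 * η := (le_div_iff₀ hR2).mp h0
        rw [div_le_div_iff₀ hA1 hR2]
        linarith [h0']
      have key : 1 / A t + η / R ^ 2 ≤ 1 / A (t + 1) := by
        rw [div_add_div _ _ (ne_of_gt hAt) (ne_of_gt hR2),
          div_le_div_iff₀ (by positivity) hAt1]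
        have hdiv : η / R ^ 2 * A t ^ 2 * R ^ 2 = η * A t ^ 2 := by field_simp
        have h5 : η * A t ^ 2 ≤ R ^ 2 * (A t - A (t + 1)) := by
          nlinarith [mul_le_mul_of_nonneg_right h hR2.le]
        have h6 : η * (A t * A (t + 1)) ≤ η * A t ^ 2 := by
          nlinarith [mul_le_mul_of_nonneg_left hmt (mul_pos hη hAt).le]
        nlinarith [mul_pos hAt hAt1]
      linarith
    · have hc1 : c / A 1 ≤ η' / A 1 ^ 2 := by
        have h0 : c ≤ η' / A 1 := min_le_right _ _
        have h0' : c * A 1 ≤ η' := (le_div_iff₀ hA1).mp h0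
        rw [div_le_div_iff₀ hA1 (by positivity)]
        nlinarith
      have key : 1 / A t + η' / A 1 ^ 2 ≤ 1 / A (t + 1) := by
        rw [div_add_div _ _ (ne_of_gt hAt) (by positivity),
          div_le_div_iff₀ (by positivity) hAt1]
        have h1 : A t * A (t + 1) ≤ A 1 ^ 2 := by nlinarith
        nlinarith [mul_le_mul_of_nonneg_right h (mul_pos hAt hAt1).le,
          mul_le_mul_of_nonneg_left h1 (sub_nonneg.mpr hmt)]
      linarith
  have main : ∀ t, 1 ≤ t → (1 + c * t) / A 1 ≤ 1 / A (t + 1) := by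
    intro t ht
    induction t with
    | zero => omega
    | succ n ih =>
      rcases Nat.lt_or_ge 1 (n + 1) with h | h
      · have h1 := ih (by omega)
        have h2 := step (n + 1) (by omega)
        have heq : (1 + c * (↑(n + 1) : ℝ)) / A 1 = (1 + c * n) / A 1 + c / A 1 := by
          push_cast
          field_simp
          ring
        rw [heq]
        calc (1 + c * ↑n) / A 1 + c / A 1 ≤ 1 / A (n + 1) + c / A 1 := by linarith
          _ ≤ 1 / A (n + 1 + 1) := h2
      · have hn : n = 0 := by omega
        subst hn
        have h2 := step 1 (le_refl _)
        have heq : (1 + c * ((1:ℕ) : ℝ)) / A 1 = 1 / A 1 + c / A 1 := by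
          push_cast
          field_simp
        rw [show ((0:ℕ) + 1 : ℕ) = 1 by rfl, heq]
        exact h2
  intro t ht
  have h := main t ht
  have hAt1 := hpos (t + 1)
  have hd : (0:ℝ) < 1 + c * t := by positivity
  rw [div_le_div_iff₀ hA1 hAt1] at h
  rw [le_div_iff₀ hd]
  nlinarith
end

section
/- Let G ∈ ℝ^{n×n} and fix indices i < j. Then min over η ∈ ℝ of Tr(G · exp(−η H_{ij})) equals ∑_{i' ∉ {i,j}} G_{i'i'} − √((G_{ii}+G_{jj})² + (G_{ij}−G_{ji})²), where H_{ij} = e_i e_jᵀ − e_j e_iᵀ. -/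
/-!
`H = e_i e_jᵀ - e_j e_iᵀ` satisfies `H² = -P` and `H P = H` for the projection
`P = e_i e_iᵀ + e_j e_jᵀ`, so splitting the exponential series into even and odd terms gives
`exp (t H) = (1 - P) + cos t • P + sin t • H`. Hence `Tr (G exp (-η H))` is the trace of `G` off
`{i, j}` plus `a cos η + b sin η` with `a = G i i + G j j`, `b = G i j - G j i`, whose minimum over
`η` is `-√(a² + b²)`.
-/

open Matrix
open scoped Nat

namespace Real

theorem isLeast_range_mul_cos_add_mul_sin (a b : ℝ) :
    IsLeast (Set.range fun θ => a * cos θ + b * sin θ) (-√(a ^ 2 + b ^ 2)) := by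
  refine ⟨⟨Complex.arg ⟨a, b⟩ + π, ?_⟩, ?_⟩
  · have hnorm : ‖(⟨a, b⟩ : ℂ)‖ = √(a ^ 2 + b ^ 2) := by
      rw [Complex.norm_def, Complex.normSq_mk]
      ring_nf
    have hcos := Complex.norm_mul_cos_arg ⟨a, b⟩
    have hsin := Complex.norm_mul_sin_arg ⟨a, b⟩
    rw [hnorm] at hcos hsin
    simp only [cos_add_pi, sin_add_pi]
    linear_combination cos (Complex.arg ⟨a, b⟩) * hcos + sin (Complex.arg ⟨a, b⟩) * hsin -
      √(a ^ 2 + b ^ 2) * sin_sq_add_cos_sq (Complex.arg ⟨a, b⟩)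
  · rintro _ ⟨θ, rfl⟩
    have hsq : (a * cos θ + b * sin θ) ^ 2 ≤ a ^ 2 + b ^ 2 := by
      nlinarith [sq_nonneg (a * sin θ - b * cos θ), sin_sq_add_cos_sq θ]
    exact neg_le_of_abs_le (abs_le_sqrt hsq)

end Real

section RotationGenerator

variable {A : Type*} [Ring A] [Algebra ℝ A] {H P : A}

theorem pow_two_mul_add_one_of_mul_self_eq_neg (hHH : H * H = -P) (hHP : H * P = H) (k : ℕ) :
    H ^ (2 * k + 1) = (-1 : ℝ) ^ k • H := by
  induction k with
  | zero => simp
  | succ k ih =>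
    rw [show 2 * (k + 1) + 1 = 2 * k + 1 + 2 by ring, pow_add, ih, sq, hHH, smul_mul_assoc,
      mul_neg, hHP, pow_succ]
    module

theorem pow_two_mul_succ_of_mul_self_eq_neg (hHH : H * H = -P) (hHP : H * P = H) (k : ℕ) :
    H ^ (2 * (k + 1)) = (-1 : ℝ) ^ (k + 1) • P := by
  rw [show 2 * (k + 1) = 2 * k + 1 + 1 by ring, pow_succ,
    pow_two_mul_add_one_of_mul_self_eq_neg hHH hHP, smul_mul_assoc, hHH, pow_succ]
  module

variable [TopologicalSpace A] [IsTopologicalRing A] [ContinuousSMul ℝ A] [T2Space A]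

theorem exp_smul_of_mul_self_eq_neg (hHH : H * H = -P) (hHP : H * P = H) (t : ℝ) :
    NormedSpace.exp (t • H) = (1 - P) + Real.cos t • P + Real.sin t • H := by
  have hEven : HasSum (fun k : ℕ => ((2 * k)! : ℝ)⁻¹ • (t • H) ^ (2 * k))
      (Real.cos t • P + (1 - P)) := by
    have hterm : (fun k : ℕ => ((2 * k)! : ℝ)⁻¹ • (t • H) ^ (2 * k)) = fun k =>
        ((-1 : ℝ) ^ k * t ^ (2 * k) / (2 * k)!) • P + if k = 0 then 1 - P else 0 := by
      funext k
      cases k with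
      | zero => simp
      | succ k =>
        rw [smul_pow, pow_two_mul_succ_of_mul_self_eq_neg hHH hHP, if_neg k.succ_ne_zero,
          add_zero, smul_smul, smul_smul]
        congr 1
        field_simp
    rw [hterm]
    exact ((Real.hasSum_cos t).smul_const P).add (hasSum_ite_eq 0 (1 - P))
  have hOdd : HasSum (fun k : ℕ => ((2 * k + 1)! : ℝ)⁻¹ • (t • H) ^ (2 * k + 1))
      (Real.sin t • H) := by
    have hterm : (fun k : ℕ => ((2 * k + 1)! : ℝ)⁻¹ • (t • H) ^ (2 * k + 1)) = fun k =>
        ((-1 : ℝ) ^ k * t ^ (2 * k + 1) / (2 * k + 1)!) • H := by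
      funext k
      rw [smul_pow, pow_two_mul_add_one_of_mul_self_eq_neg hHH hHP, smul_smul, smul_smul]
      congr 1
      field_simp
    rw [hterm]
    exact (Real.hasSum_sin t).smul_const H
  rw [NormedSpace.exp_eq_tsum ℝ, add_comm (1 - P)]
  exact (HasSum.even_add_odd (f := fun m : ℕ => (m ! : ℝ)⁻¹ • (t • H) ^ m) hEven hOdd).tsum_eq

end RotationGenerator

namespace Matrix

variable {ι R : Type*} [Fintype ι] [DecidableEq ι] {i j : ι}

theorem single_sub_single_mul_self [Ring R] (hij : i ≠ j) :
    (single i j (1 : R) - single j i 1) * (single i j 1 - single j i 1) =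
      -(single i i 1 + single j j 1) := by
  simp only [mul_sub, sub_mul, single_mul_single_same, single_mul_single_of_ne, hij, hij.symm,
    ne_eq, not_false_eq_true, mul_one, zero_sub, sub_zero, neg_add_rev]
  abel

theorem single_sub_single_mul_single_add_single [Ring R] (hij : i ≠ j) :
    (single i j (1 : R) - single j i 1) * (single i i 1 + single j j 1) =
      single i j 1 - single j i 1 := by
  simp only [mul_add, sub_mul, single_mul_single_same, single_mul_single_of_ne, hij, hij.symm,
    ne_eq, not_false_eq_true, mul_one, zero_sub, sub_zero]
  abel

theorem trace_eq_sum_filter_ne_add [AddCommMonoid R] (A : Matrix ι ι R) (hij : i ≠ j) :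
    trace A = ∑ k ∈ Finset.univ.filter (fun k => k ≠ i ∧ k ≠ j), A k k + (A i i + A j j) := by
  rw [trace, ← Finset.sum_filter_add_sum_filter_not Finset.univ (fun k => k ≠ i ∧ k ≠ j)]
  have hpair : Finset.univ.filter (fun k => ¬(k ≠ i ∧ k ≠ j)) = {i, j} := by
    ext
    simp [or_iff_not_and_not]
  rw [hpair, Finset.sum_pair hij]
  rfl

theorem trace_mul_exp_smul_single_sub_single (G : Matrix ι ι ℝ) (hij : i ≠ j) (t : ℝ) :
    trace (G * NormedSpace.exp (t • (single i j 1 - single j i 1))) =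
      ∑ k ∈ Finset.univ.filter (fun k => k ≠ i ∧ k ≠ j), G k k +
        ((G i i + G j j) * Real.cos t + (G j i - G i j) * Real.sin t) := by
  rw [exp_smul_of_mul_self_eq_neg (single_sub_single_mul_self hij)
    (single_sub_single_mul_single_add_single hij)]
  simp only [Matrix.mul_add, Matrix.mul_sub, Matrix.mul_one, Matrix.mul_smul, trace_add,
    trace_sub, trace_smul, trace_mul_single, smul_eq_mul, MulOpposite.op_one, one_smul,
    trace_eq_sum_filter_ne_add G hij]
  ring

end Matrix

theorem stmt16 {n : ℕ} (G : Matrix (Fin n) (Fin n) ℝ) (i j : Fin n) (hij : i < j)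
    (H : Matrix (Fin n) (Fin n) ℝ)
    (hH : H = Matrix.single i j 1 - Matrix.single j i 1) :
    IsLeast {x : ℝ | ∃ η : ℝ, x = Matrix.trace (G * NormedSpace.exp (-η • H))}
      ((∑ i' ∈ Finset.univ.filter fun i' => i' ≠ i ∧ i' ≠ j, G i' i') -
        Real.sqrt ((G i i + G j j) ^ 2 + (G i j - G j i) ^ 2)) := by
  set S := ∑ i' ∈ Finset.univ.filter fun i' => i' ≠ i ∧ i' ≠ j, G i' i'
  set a := G i i + G j j
  set b := G i j - G j i
  have htrace (η : ℝ) :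
      Matrix.trace (G * NormedSpace.exp (-η • H)) = S + (a * Real.cos η + b * Real.sin η) := by
    rw [hH, Matrix.trace_mul_exp_smul_single_sub_single G hij.ne, Real.cos_neg, Real.sin_neg]
    ring
  obtain ⟨⟨θ, hθ⟩, hmin⟩ := Real.isLeast_range_mul_cos_add_mul_sin a b
  refine ⟨⟨θ, ?_⟩, ?_⟩
  · rw [htrace, sub_eq_add_neg]
    exact congrArg (S + ·) hθ.symm
  · rintro _ ⟨η, rfl⟩
    rw [htrace, sub_eq_add_neg]
    exact add_le_add_right (hmin ⟨η, rfl⟩) S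
end

section
/- Let H_{ij} = e_i e_jᵀ − e_j e_iᵀ ∈ ℝ^{n×n} and let i, j, i', j' be four distinct indices. Define C = π(H_{ii'} + H_{jj'}). Then exp(C/2)ᵀ · H_{i'j'} · exp(C/2) = H_{ij}. -/
/-!
`A = H_{ii'} + H_{jj'}` acts as a quarter turn on the planes `⟨e_i, e_{i'}⟩` and `⟨e_j, e_{j'}⟩`
and kills the other basis vectors, so `A ^ 3 = -A`. Summing the exponential series then gives
Rodrigues' formula `exp (t • A) = 1 + sin t • A + (1 - cos t) • A ^ 2`, so `E = exp (π/2 • A)`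
equals `1 + A + A ^ 2`. Its rows `i'` and `j'` are `-e_i` and `-e_j`, and since
`(Eᵀ * single a b 1 * E) = (row a of E) ⊗ (row b of E)`, conjugating `H_{i'j'}` by `E` yields `H_{ij}`.
-/

open Matrix

noncomputable def Hmat {n : ℕ} (i j : Fin n) : Matrix (Fin n) (Fin n) ℝ :=
  Matrix.single i j 1 - Matrix.single j i 1

open Nat in
theorem NormedSpace.exp_smul_of_pow_three_eq_neg {𝔸 : Type*} [Ring 𝔸] [Algebra ℝ 𝔸]
    [TopologicalSpace 𝔸] [IsTopologicalRing 𝔸] [ContinuousSMul ℝ 𝔸] [T2Space 𝔸]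
    {A : 𝔸} (hA : A ^ 3 = -A) (t : ℝ) :
    NormedSpace.exp (t • A) = 1 + Real.sin t • A + (1 - Real.cos t) • A ^ 2 := by
  have hodd (k : ℕ) : A ^ (2 * k + 1) = (-1 : ℝ) ^ k • A := by
    induction k with
    | zero => simp
    | succ k ih =>
      rw [show 2 * (k + 1) + 1 = 2 + (2 * k + 1) by ring, pow_add, ih, mul_smul_comm,
        ← pow_succ, hA, pow_succ, mul_neg_one, neg_smul, smul_neg]
  have heven (k : ℕ) : A ^ (2 * (k + 1)) = (-1 : ℝ) ^ k • A ^ 2 := by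
    rw [mul_add, mul_one, pow_succ, hodd, smul_mul_assoc, ← pow_two]
  have hsin : HasSum (fun k ↦ ((2 * k + 1)! : ℝ)⁻¹ • (t • A) ^ (2 * k + 1)) (Real.sin t • A) :=
    ((Real.hasSum_sin t).smul_const A).congr_fun fun k ↦ by
      rw [smul_pow, hodd, smul_smul, smul_smul]
      congr 1
      ring
  -- the cosine series gives `-A ^ 2` instead of `1` at `k = 0`; the indicator term corrects that
  have hcos : HasSum (fun k ↦ ((2 * k)! : ℝ)⁻¹ • (t • A) ^ (2 * k))
      ((1 + A ^ 2) + Real.cos t • -A ^ 2) := by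
    have h₀ : HasSum (fun k : ℕ ↦ if k = 0 then 1 + A ^ 2 else 0) (1 + A ^ 2) :=
      hasSum_ite_eq 0 _
    have h₁ := (Real.hasSum_cos t).smul_const (-A ^ 2)
    refine (h₀.add h₁).congr_fun fun k ↦ ?_
    rcases k with _ | k
    · simp
    · rw [if_neg k.succ_ne_zero, zero_add, smul_pow, heven, smul_smul, smul_smul, smul_neg,
        ← neg_smul]
      congr 1
      rw [pow_succ]
      ring
  rw [NormedSpace.exp_eq_tsum ℝ]
  refine (HasSum.even_add_odd (f := fun m ↦ (m ! : ℝ)⁻¹ • (t • A) ^ m) hcos hsin).tsum_eq.trans ?_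
  module

namespace Matrix

variable {ι R : Type*} [Fintype ι] [DecidableEq ι] [CommRing R]

theorem transpose_mul_single_one_mul (P : Matrix ι ι R) (a b : ι) :
    Pᵀ * single a b 1 * P = vecMulVec (Pi.single a 1 ᵥ* P) (Pi.single b 1 ᵥ* P) := by
  rw [single_eq_single_vecMulVec_single, mul_vecMulVec, vecMulVec_mul, mulVec_transpose]

section RotatedPair

-- `ha`, `hb` below say that `A` acts on row vectors as the quarter turn `e a ↦ e b ↦ -e a`
variable {A : Matrix ι ι R} {a b : ι}

theorem single_vecMul_sq_left_of_rotates (ha : Pi.single a 1 ᵥ* A = Pi.single b 1)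
    (hb : Pi.single b 1 ᵥ* A = -Pi.single a 1) :
    Pi.single a 1 ᵥ* A ^ 2 = -Pi.single a 1 := by
  rw [sq, ← vecMul_vecMul, ha, hb]

theorem single_vecMul_sq_right_of_rotates (ha : Pi.single a 1 ᵥ* A = Pi.single b 1)
    (hb : Pi.single b 1 ᵥ* A = -Pi.single a 1) :
    Pi.single b 1 ᵥ* A ^ 2 = -Pi.single b 1 := by
  rw [sq, ← vecMul_vecMul, hb, neg_vecMul, ha]

theorem single_vecMul_one_add_add_sq_of_rotates (ha : Pi.single a 1 ᵥ* A = Pi.single b 1)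
    (hb : Pi.single b 1 ᵥ* A = -Pi.single a 1) :
    Pi.single b 1 ᵥ* (1 + A + A ^ 2) = -Pi.single a 1 := by
  rw [vecMul_add, vecMul_add, vecMul_one, hb, single_vecMul_sq_right_of_rotates ha hb,
    add_neg_cancel_comm]

end RotatedPair

theorem pow_three_eq_neg_of_single_vecMul {A : Matrix ι ι R}
    (h : ∀ x, Pi.single x 1 ᵥ* A = 0 ∨ Pi.single x 1 ᵥ* A ^ 2 = -Pi.single x 1) :
    A ^ 3 = -A := by
  refine ext_of_single_vecMul fun x ↦ ?_
  rw [vecMul_neg]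
  rcases h x with hx | hx
  · rw [pow_succ', ← vecMul_vecMul, hx, zero_vecMul, neg_zero]
  · rw [pow_succ, ← vecMul_vecMul, hx, neg_vecMul]

end Matrix

section Hmat

variable {n : ℕ} {a b c d x : Fin n}

theorem Hmat_eq_vecMulVec (a b : Fin n) :
    Hmat a b = vecMulVec (Pi.single a 1) (Pi.single b 1) -
      vecMulVec (Pi.single b 1) (Pi.single a 1) := by
  rw [Hmat, single_eq_single_vecMulVec_single, single_eq_single_vecMulVec_single]

theorem single_vecMul_Hmat_left (h : a ≠ b) : Pi.single a 1 ᵥ* Hmat a b = Pi.single b 1 := by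
  simp [Hmat_eq_vecMulVec, vecMul_sub, vecMul_vecMulVec, h]

theorem single_vecMul_Hmat_right (h : a ≠ b) : Pi.single b 1 ᵥ* Hmat a b = -Pi.single a 1 := by
  simp [Hmat_eq_vecMulVec, vecMul_sub, vecMul_vecMulVec, h.symm]

theorem single_vecMul_Hmat_of_ne (ha : x ≠ a) (hb : x ≠ b) : Pi.single x 1 ᵥ* Hmat a b = 0 := by
  simp [Hmat_eq_vecMulVec, vecMul_sub, vecMul_vecMulVec, ha, hb]

theorem transpose_mul_Hmat_mul_of_neg {P : Matrix (Fin n) (Fin n) ℝ}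
    (ha : Pi.single a 1 ᵥ* P = -Pi.single c 1) (hb : Pi.single b 1 ᵥ* P = -Pi.single d 1) :
    Pᵀ * Hmat a b * P = Hmat c d := by
  rw [Hmat, mul_sub, sub_mul, transpose_mul_single_one_mul, transpose_mul_single_one_mul, ha, hb,
    Hmat_eq_vecMulVec, neg_vecMulVec, vecMulVec_neg, neg_neg, neg_vecMulVec, vecMulVec_neg, neg_neg]

theorem single_vecMul_Hmat_add_Hmat_left (hab : a ≠ b) (hac : a ≠ c) (had : a ≠ d) :
    Pi.single a 1 ᵥ* (Hmat a b + Hmat c d) = Pi.single b 1 := by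
  rw [vecMul_add, single_vecMul_Hmat_left hab, single_vecMul_Hmat_of_ne hac had, add_zero]

theorem single_vecMul_Hmat_add_Hmat_right (hab : a ≠ b) (hbc : b ≠ c) (hbd : b ≠ d) :
    Pi.single b 1 ᵥ* (Hmat a b + Hmat c d) = -Pi.single a 1 := by
  rw [vecMul_add, single_vecMul_Hmat_right hab, single_vecMul_Hmat_of_ne hbc hbd, add_zero]

theorem Hmat_add_Hmat_pow_three (hab : a ≠ b) (hac : a ≠ c) (had : a ≠ d) (hbc : b ≠ c)
    (hbd : b ≠ d) (hcd : c ≠ d) :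
    (Hmat a b + Hmat c d) ^ 3 = -(Hmat a b + Hmat c d) := by
  have hcdab : Hmat a b + Hmat c d = Hmat c d + Hmat a b := add_comm _ _
  have ha := single_vecMul_Hmat_add_Hmat_left (c := c) (d := d) hab hac had
  have hb := single_vecMul_Hmat_add_Hmat_right (c := c) (d := d) hab hbc hbd
  have hc := hcdab ▸ single_vecMul_Hmat_add_Hmat_left (c := a) (d := b) hcd hac.symm hbc.symm
  have hd := hcdab ▸ single_vecMul_Hmat_add_Hmat_right (c := a) (d := b) hcd had.symm hbd.symm
  refine pow_three_eq_neg_of_single_vecMul fun x ↦ ?_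
  by_cases hxab : x = a ∨ x = b
  · rcases hxab with rfl | rfl
    · exact .inr (single_vecMul_sq_left_of_rotates ha hb)
    · exact .inr (single_vecMul_sq_right_of_rotates ha hb)
  by_cases hxcd : x = c ∨ x = d
  · rcases hxcd with rfl | rfl
    · exact .inr (single_vecMul_sq_left_of_rotates hc hd)
    · exact .inr (single_vecMul_sq_right_of_rotates hc hd)
  rw [not_or] at hxab hxcd
  left
  rw [vecMul_add, single_vecMul_Hmat_of_ne hxab.1 hxab.2, single_vecMul_Hmat_of_ne hxcd.1 hxcd.2,
    add_zero]

end Hmat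

theorem stmt18 {n : ℕ} (i j i' j' : Fin n)
    (h1 : i ≠ j) (h2 : i ≠ i') (h3 : i ≠ j') (h4 : j ≠ i') (h5 : j ≠ j') (h6 : i' ≠ j')
    (C : Matrix (Fin n) (Fin n) ℝ)
    (hC : C = Real.pi • (Hmat i i' + Hmat j j')) :
    (NormedSpace.exp ((1 / 2 : ℝ) • C))ᵀ * Hmat i' j' *
        NormedSpace.exp ((1 / 2 : ℝ) • C) = Hmat i j := by
  set A := Hmat i i' + Hmat j j' with hA
  have hi : Pi.single i 1 ᵥ* A = Pi.single i' 1 := single_vecMul_Hmat_add_Hmat_left h2 h1 h3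
  have hi' : Pi.single i' 1 ᵥ* A = -Pi.single i 1 :=
    single_vecMul_Hmat_add_Hmat_right h2 h4.symm h6
  have hj : Pi.single j 1 ᵥ* A = Pi.single j' 1 := by
    rw [hA, add_comm]; exact single_vecMul_Hmat_add_Hmat_left h5 h1.symm h4
  have hj' : Pi.single j' 1 ᵥ* A = -Pi.single j 1 := by
    rw [hA, add_comm]; exact single_vecMul_Hmat_add_Hmat_right h5 h3.symm h6.symm
  have hexp : NormedSpace.exp ((1 / 2 : ℝ) • C) = 1 + A + A ^ 2 := by
    rw [hC, smul_smul, one_div_mul_eq_div,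
      NormedSpace.exp_smul_of_pow_three_eq_neg (Hmat_add_Hmat_pow_three h2 h1 h3 h4.symm h6 h5),
      Real.sin_pi_div_two, Real.cos_pi_div_two, one_smul, sub_zero, one_smul]
  rw [hexp]
  exact transpose_mul_Hmat_mul_of_neg (single_vecMul_one_add_add_sq_of_rotates hi hi')
    (single_vecMul_one_add_add_sq_of_rotates hj hj')
end
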